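/- arXiv:2502.17744 — 2 statements merged into one kernel-verified Lean document; each statement's English description precedes it below -/
import Mathlib

section
/- Let w : ι → ℝ be a weight function on a finite index set R of size N, and fix an element T ∈ R and an index i ∈ R. Consider all permutations σ of R such that σ(T) = i, where the product ∏_{k∈R} w_k(x_{σ(k)}) is taken with w_k(x) = 1 for k in a fixed subset S of size N_S (with T ∉ S) and w_k(x) = w(x) for k ∉ S (a set of size N_T + 1, including T). Then the summation ∑_{σ : σ(T)=i} ∏_{k∈R} w_k(x_{σ(k)}) equals N_S! · N_T! · w(x_i) · e_{N_T}({w(x_c) : c ∈ R, c ≠ i}), where e_{N_T} denotes the N_T-th elementary symmetric polynomial. -/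
open Finset


section Aux
variable {ι : Type*} [Fintype ι] [DecidableEq ι]

/-- Glue a bijection on `Sᶜ.erase T`, the assignment `T ↦ i`, and a bijection on `S`
into a permutation of `ι`. -/
def glue (S : Finset ι) (T i : ι) (hT : T ∉ S) (A : Finset ι) (hAi : i ∉ A)
    (f : ↥(Sᶜ.erase T) ≃ ↥A) (g : ↥S ≃ ↥((insert i A)ᶜ : Finset ι)) : Equiv.Perm ι where
  toFun a :=
    if ha : a ∈ Sᶜ.erase T then (f ⟨a, ha⟩ : ι)
    else if haT : a = T then i
    else (g ⟨a, by
      simp only [Finset.mem_erase, Finset.mem_compl, not_and, not_not] at ha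
      exact ha haT⟩ : ι)
  invFun b :=
    if hb : b ∈ A then (f.symm ⟨b, hb⟩ : ι)
    else if hbi : b = i then T
    else (g.symm ⟨b, by simp [Finset.mem_compl, Finset.mem_insert, hb, hbi]⟩ : ι)
  left_inv a := by
    by_cases ha : a ∈ Sᶜ.erase T
    · simp only [dif_pos ha, (f ⟨a, ha⟩).2, dif_pos]
      simp
    · by_cases haT : a = T
      · have : i ∉ A := hAi
        simp only [dif_neg ha, dif_pos haT, dif_neg this, dif_pos rfl]
        exact haT.symm
      · have hmem := (g ⟨a, by
          simp only [Finset.mem_erase, Finset.mem_compl, not_and, not_not] at ha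
          exact ha haT⟩).2
        simp only [Finset.mem_compl, Finset.mem_insert, not_or] at hmem
        simp only [dif_neg ha, dif_neg haT, dif_neg hmem.2, dif_neg hmem.1]
        simp
  right_inv b := by
    by_cases hb : b ∈ A
    · have hmem := (f.symm ⟨b, hb⟩).2
      simp only [dif_pos hb, dif_pos hmem]
      simp
    · by_cases hbi : b = i
      · have hT' : T ∉ Sᶜ.erase T := by simp
        simp only [dif_neg hb, dif_pos hbi, dif_neg hT', dif_pos rfl]
        exact hbi.symm
      · have hmem := (g.symm ⟨b, by simp [Finset.mem_compl, Finset.mem_insert, hb, hbi]⟩).2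
        have h1 : (g.symm ⟨b, by simp [Finset.mem_compl, Finset.mem_insert, hb, hbi]⟩ : ι) ∉ Sᶜ.erase T := by
          simp [Finset.mem_erase, Finset.mem_compl, hmem]
        have h2 : (g.symm ⟨b, by simp [Finset.mem_compl, Finset.mem_insert, hb, hbi]⟩ : ι) ≠ T := by
          intro h
          exact hT (h ▸ hmem)
        simp only [dif_neg hb, dif_neg hbi, dif_neg h1, dif_neg h2]
        simp

lemma glue_apply_mem (S : Finset ι) (T i : ι) (hT : T ∉ S) (A : Finset ι) (hAi : i ∉ A)
    (f : ↥(Sᶜ.erase T) ≃ ↥A) (g : ↥S ≃ ↥((insert i A)ᶜ : Finset ι))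
    (a : ι) (ha : a ∈ Sᶜ.erase T) :
    glue S T i hT A hAi f g a = (f ⟨a, ha⟩ : ι) := by
  simp only [glue, Equiv.coe_fn_mk, dif_pos ha]

lemma glue_apply_T (S : Finset ι) (T i : ι) (hT : T ∉ S) (A : Finset ι) (hAi : i ∉ A)
    (f : ↥(Sᶜ.erase T) ≃ ↥A) (g : ↥S ≃ ↥((insert i A)ᶜ : Finset ι)) :
    glue S T i hT A hAi f g T = i := by
  have h1 : T ∉ Sᶜ.erase T := by simp
  simp only [glue, Equiv.coe_fn_mk, dif_neg h1]
  simp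

lemma glue_apply_S (S : Finset ι) (T i : ι) (hT : T ∉ S) (A : Finset ι) (hAi : i ∉ A)
    (f : ↥(Sᶜ.erase T) ≃ ↥A) (g : ↥S ≃ ↥((insert i A)ᶜ : Finset ι))
    (a : ι) (ha : a ∈ S) :
    glue S T i hT A hAi f g a = (g ⟨a, ha⟩ : ι) := by
  have h1 : a ∉ Sᶜ.erase T := by simp [Finset.mem_erase, Finset.mem_compl, ha]
  have h2 : a ≠ T := fun h => hT (h ▸ ha)
  simp only [glue, Equiv.coe_fn_mk, dif_neg h1, dif_neg h2]

lemma glue_image (S : Finset ι) (T i : ι) (hT : T ∉ S) (A : Finset ι) (hAi : i ∉ A)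
    (hA : A.card = (Sᶜ.erase T).card)
    (f : ↥(Sᶜ.erase T) ≃ ↥A) (g : ↥S ≃ ↥((insert i A)ᶜ : Finset ι)) :
    (Sᶜ.erase T).image (glue S T i hT A hAi f g) = A := by
  apply Finset.eq_of_subset_of_card_le
  · intro b hb
    obtain ⟨a, ha, rfl⟩ := Finset.mem_image.1 hb
    rw [glue_apply_mem S T i hT A hAi f g a ha]
    exact (f ⟨a, ha⟩).2
  · rw [Finset.card_image_of_injective _ (glue S T i hT A hAi f g).injective, hA]

end Aux

section Fiber
variable {ι : Type*} [Fintype ι] [DecidableEq ι]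

lemma fiber_key (S : Finset ι) (T : ι) (hT : T ∉ S) (i : ι) (A : Finset ι)
    {σ : Equiv.Perm ι} (hσT : σ T = i) (himg : (Sᶜ.erase T).image σ = A) :
    (∀ a, a ∈ Sᶜ.erase T ↔ σ a ∈ A) ∧ (∀ a, a ∈ S ↔ σ a ∈ ((insert i A)ᶜ : Finset ι)) := by
  have hU : ∀ a, a ∈ Sᶜ.erase T ↔ σ a ∈ A := by
    intro a
    constructor
    · intro ha
      rw [← himg]
      exact Finset.mem_image_of_mem σ ha
    · intro ha
      rw [← himg] at ha
      obtain ⟨u, hu, hequ⟩ := Finset.mem_image.1 ha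
      rwa [σ.injective hequ] at hu
  refine ⟨hU, fun a => ?_⟩
  constructor
  · intro ha
    simp only [Finset.mem_compl, Finset.mem_insert, not_or]
    constructor
    · intro h
      have : a = T := σ.injective (by rw [h, hσT])
      exact hT (this ▸ ha)
    · intro h
      have := (hU a).2 h
      rw [Finset.mem_erase, Finset.mem_compl] at this
      exact this.2 ha
  · intro ha
    simp only [Finset.mem_compl, Finset.mem_insert, not_or] at ha
    by_contra haS
    by_cases haT : a = T
    · exact ha.1 (haT ▸ hσT)
    · exact ha.2 ((hU a).1 (by simp [Finset.mem_erase, Finset.mem_compl, haT, haS]))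

lemma fiber_card (S : Finset ι) (T : ι) (hT : T ∉ S) (i : ι) (A : Finset ι)
    (hAi : i ∉ A) (hA : A.card = (Sᶜ.erase T).card) :
    (((Finset.univ.filter (fun σ : Equiv.Perm ι => σ T = i)).filter
        (fun σ : Equiv.Perm ι => (Sᶜ.erase T).image ⇑σ = A)).card)
      = (Sᶜ.erase T).card.factorial * S.card.factorial := by
  have hmem : ∀ σ : Equiv.Perm ι,
      σ ∈ (Finset.univ.filter (fun σ : Equiv.Perm ι => σ T = i)).filter
        (fun σ : Equiv.Perm ι => (Sᶜ.erase T).image ⇑σ = A) ↔ σ T = i ∧ (Sᶜ.erase T).image σ = A := by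
    intro σ; simp [Finset.mem_filter]
  have hcard :
      (((Finset.univ.filter (fun σ : Equiv.Perm ι => σ T = i)).filter
        (fun σ : Equiv.Perm ι => (Sᶜ.erase T).image ⇑σ = A)).card)
      = (Finset.univ : Finset ((↥(Sᶜ.erase T) ≃ ↥A) × (↥S ≃ ↥((insert i A)ᶜ : Finset ι)))).card := by
    refine Finset.card_bij'
      (fun σ hσ => (σ.subtypeEquiv (fiber_key S T hT i A ((hmem σ).1 hσ).1 ((hmem σ).1 hσ).2).1,
                     σ.subtypeEquiv (fiber_key S T hT i A ((hmem σ).1 hσ).1 ((hmem σ).1 hσ).2).2))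
      (fun p _ => glue S T i hT A hAi p.1 p.2) (fun σ hσ => Finset.mem_univ _)
      (fun p hp => ?_) (fun σ hσ => ?_) (fun p hp => ?_)
    · rw [hmem]
      exact ⟨glue_apply_T S T i hT A hAi p.1 p.2, glue_image S T i hT A hAi hA p.1 p.2⟩
    · apply Equiv.ext
      intro a
      by_cases ha : a ∈ Sᶜ.erase T
      · rw [glue_apply_mem S T i hT A hAi _ _ a ha]
        simp [Equiv.subtypeEquiv_apply]
      · by_cases haT : a = T
        · subst haT
          rw [glue_apply_T]
          exact (((hmem σ).1 hσ).1).symm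
        · have haS : a ∈ S := by
            simp only [Finset.mem_erase, Finset.mem_compl, not_and, not_not] at ha
            exact ha haT
          rw [glue_apply_S S T i hT A hAi _ _ a haS]
          simp [Equiv.subtypeEquiv_apply]
    · apply Prod.ext
      · apply Equiv.ext
        rintro ⟨a, ha⟩
        apply Subtype.ext
        simp only [Equiv.subtypeEquiv_apply]
        exact glue_apply_mem S T i hT A hAi p.1 p.2 a ha
      · apply Equiv.ext
        rintro ⟨a, ha⟩
        apply Subtype.ext
        simp only [Equiv.subtypeEquiv_apply]
        exact glue_apply_S S T i hT A hAi p.1 p.2 a ha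
  rw [hcard, Finset.card_univ, Fintype.card_prod]
  have hSC : S.card = ((insert i A)ᶜ : Finset ι).card := by
    have h1 : ((insert i A)ᶜ : Finset ι).card = Fintype.card ι - (insert i A).card :=
      Finset.card_compl _
    have h2 : (insert i A).card = A.card + 1 := Finset.card_insert_of_notMem hAi
    have h3 : (Sᶜ.erase T).card = Sᶜ.card - 1 :=
      Finset.card_erase_of_mem (Finset.mem_compl.2 hT)
    have h4 : 1 ≤ Sᶜ.card := Finset.card_pos.2 ⟨T, Finset.mem_compl.2 hT⟩
    have h5 : S.card + Sᶜ.card = Fintype.card ι := Finset.card_add_card_compl S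
    omega
  rw [Fintype.card_equiv (Finset.equivOfCardEq hA.symm),
      Fintype.card_equiv (Finset.equivOfCardEq hSC)]
  rw [Fintype.card_coe, Fintype.card_coe]

end Fiber


/-- The sum over all permutations `σ` of the finite index set with `σ T = i` of the product
of initial weights (value `1` on the source subset `S`, value `w ∘ x` elsewhere, where the
complement of `S` contains the test index `T` and has `N_T + 1` elements) equals
`N_S! ⬝ N_T! ⬝ w (x i) ⬝ e_{N_T}({w (x c) : c ≠ i})`. -/
theorem perm_weight_sum_eq_esymm (ι : Type*) [Fintype ι] [DecidableEq ι]
    (S : Finset ι) (T : ι) (hT : T ∉ S) (i : ι) (x : ι → ℝ) (w : ℝ → ℝ) :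
    (∑ σ ∈ Finset.univ.filter (fun σ : Equiv.Perm ι => σ T = i),
        ∏ k, (if k ∈ S then (1 : ℝ) else w (x (σ k)))) =
      (S.card.factorial : ℝ) * (((Sᶜ : Finset ι).card - 1).factorial : ℝ) * w (x i) *
        ∑ A ∈ ({i}ᶜ : Finset ι).powersetCard ((Sᶜ : Finset ι).card - 1),
          ∏ c ∈ A, w (x c) := by
  have hTc : T ∈ Sᶜ := Finset.mem_compl.2 hT
  have hUcard : (Sᶜ.erase T).card = Sᶜ.card - 1 := Finset.card_erase_of_mem hTc
  have hprod : ∀ σ : Equiv.Perm ι, σ T = i →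
      (∏ k, (if k ∈ S then (1:ℝ) else w (x (σ k)))) =
        w (x i) * ∏ k ∈ Sᶜ.erase T, w (x (σ k)) := by
    intro σ hσ
    have hfil : Finset.univ.filter (fun k => k ∉ S) = Sᶜ := by ext k; simp
    rw [Finset.prod_ite, Finset.prod_const_one, one_mul, hfil,
      ← Finset.mul_prod_erase Sᶜ (fun k => w (x (σ k))) hTc, hσ]
  have hmaps : ∀ σ ∈ Finset.univ.filter (fun σ : Equiv.Perm ι => σ T = i),
      (Sᶜ.erase T).image ⇑σ ∈ ({i}ᶜ : Finset ι).powersetCard (Sᶜ.card - 1) := by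
    intro σ hσ
    have hσT : σ T = i := by simpa using hσ
    rw [Finset.mem_powersetCard]
    constructor
    · intro b hb
      obtain ⟨u, hu, rfl⟩ := Finset.mem_image.1 hb
      simp only [Finset.mem_compl, Finset.mem_singleton]
      intro h
      exact (Finset.mem_erase.1 hu).1 (σ.injective (h.trans hσT.symm))
    · rw [Finset.card_image_of_injective _ σ.injective, hUcard]
  calc (∑ σ ∈ Finset.univ.filter (fun σ : Equiv.Perm ι => σ T = i),
        ∏ k, (if k ∈ S then (1 : ℝ) else w (x (σ k))))
      = ∑ σ ∈ Finset.univ.filter (fun σ : Equiv.Perm ι => σ T = i),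
          w (x i) * ∏ k ∈ Sᶜ.erase T, w (x (σ k)) :=
        Finset.sum_congr rfl (fun σ hσ => hprod σ (by simpa using hσ))
    _ = ∑ A ∈ ({i}ᶜ : Finset ι).powersetCard (Sᶜ.card - 1),
          ∑ σ ∈ (Finset.univ.filter (fun σ : Equiv.Perm ι => σ T = i)).filter
              (fun σ : Equiv.Perm ι => (Sᶜ.erase T).image ⇑σ = A),
          w (x i) * ∏ k ∈ Sᶜ.erase T, w (x (σ k)) :=
        (Finset.sum_fiberwise_of_maps_to hmaps _).symm
    _ = ∑ A ∈ ({i}ᶜ : Finset ι).powersetCard (Sᶜ.card - 1),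
          ((Sᶜ.erase T).card.factorial * S.card.factorial) •
            (w (x i) * ∏ c ∈ A, w (x c)) := by
        apply Finset.sum_congr rfl
        intro A hA
        rw [Finset.mem_powersetCard] at hA
        have hAi : i ∉ A := fun h => by simpa using hA.1 h
        have hA' : A.card = (Sᶜ.erase T).card := by rw [hUcard]; exact hA.2
        have hval : ∀ σ ∈ (Finset.univ.filter (fun σ : Equiv.Perm ι => σ T = i)).filter
              (fun σ : Equiv.Perm ι => (Sᶜ.erase T).image ⇑σ = A),
            w (x i) * ∏ k ∈ Sᶜ.erase T, w (x (σ k)) = w (x i) * ∏ c ∈ A, w (x c) := by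
          intro σ hσ
          have himg : (Sᶜ.erase T).image ⇑σ = A := (Finset.mem_filter.1 hσ).2
          rw [← himg, Finset.prod_image (fun a _ b _ h => σ.injective h)]
        rw [Finset.sum_congr rfl hval, Finset.sum_const, fiber_card S T hT i A hAi hA']
    _ = _ := by
        simp only [nsmul_eq_mul, Nat.cast_mul, hUcard, ← Finset.mul_sum]
        ring
end

section
/- For exchangeable real random variables V_1,...,V_{n+1} (joint distribution invariant to permutations), the permutation weights p_i defined with all w_j ≡ 1 equal 1/(n+1) for each i, and consequently P(V_{n+1} ≤ Quantile(β; (1/(n+1)) ∑_{i=1}^{n} δ_{V_i} + (1/(n+1)) δ_∞)) ≥ β for every β ∈ (0,1). -/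
/-!
With all weights equal to `1` every permutation contributes the same product, and the
permutations sending `n + 1` to `i` are equinumerous for all `i` (left multiplication by a
transposition), so `p_i = 1 / (n + 1)`.

For coverage let `m = ⌈β (n + 1)⌉`. For every sample `u`, at least `m` indices `i` have fewer than
`m` values strictly below `u i`. By exchangeability all indices have the same probability of this
event, so it has probability at least `m / (n + 1) ≥ β`. When it holds for `i = n + 1`, every
`t < V_{n+1}` has fewer than `β (n + 1)` of the `V_i` at or below it, so `t` lies below the quantile.
-/

open MeasureTheory Finset

/-- The normalized permutation weight `p_i`. -/
noncomputable def permWeight (n : ℕ) (w : Fin (n + 1) → ℝ → ℝ) (v : Fin (n + 1) → ℝ)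
    (i : Fin (n + 1)) : ℝ :=
  (∑ σ ∈ Finset.univ.filter (fun σ : Equiv.Perm (Fin (n + 1)) => σ (Fin.last n) = i),
      ∏ j, w j (v (σ j))) /
    (∑ σ : Equiv.Perm (Fin (n + 1)), ∏ j, w j (v (σ j)))

/-- `Quantile(β; ∑_{i=1}^n p_i δ_{v_i} + p_{n+1} δ_∞)`. -/
noncomputable def wQuantile (n : ℕ) (β : ℝ) (p : Fin (n + 1) → ℝ) (v : Fin n → ℝ) : EReal :=
  sInf {t : EReal |
    β ≤ (∑ i : Fin n, if (v i : EReal) ≤ t then p i.castSucc else 0) +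
      (if t = ⊤ then p (Fin.last n) else 0)}

open scoped ENNReal

namespace Equiv.Perm

variable {α : Type*} [Fintype α] [DecidableEq α]

lemma card_filter_apply_eq (a b : α) :
    #{σ : Perm α | σ a = b} = #{σ : Perm α | σ a = a} :=
  (card_equiv (Equiv.mulLeft (swap a b)) fun σ => by
    simp [swap_apply_eq_iff]).symm

lemma card_eq_card_mul_card_filter_apply_eq (a : α) :
    Fintype.card (Perm α) = Fintype.card α * #{σ : Perm α | σ a = a} := by
  rw [← card_univ, card_eq_sum_card_fiberwise (f := fun σ : Perm α => σ a) (t := univ)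
    fun _ _ => mem_univ _]
  simp [card_filter_apply_eq a]

end Equiv.Perm

lemma permWeight_const_one (n : ℕ) (v : Fin (n + 1) → ℝ) (i : Fin (n + 1)) :
    permWeight n (fun _ _ => 1) v i = 1 / (n + 1) := by
  have hfiber : #{σ : Equiv.Perm (Fin (n + 1)) | σ (Fin.last n) = Fin.last n} ≠ 0 :=
    card_ne_zero.2 ⟨1, by simp⟩
  simp only [permWeight, prod_const_one, sum_const, nsmul_eq_mul, mul_one, card_univ,
    Equiv.Perm.card_eq_card_mul_card_filter_apply_eq (Fin.last n),
    Equiv.Perm.card_filter_apply_eq (Fin.last n) i, Fintype.card_fin]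
  field_simp
  push_cast
  ring

section StrictRank

variable {ι α : Type*} [Fintype ι] [LinearOrder α]

def strictRank (u : ι → α) (i : ι) : ℕ := #{j | u j < u i}

lemma strictRank_comp (u : ι → α) (σ : Equiv.Perm ι) (i : ι) :
    strictRank (u ∘ σ) i = strictRank u (σ i) :=
  card_equiv σ fun j => by simp

/-- A minimal element outside `{i | strictRank u i < m}` would have all its strict lower values
inside this set, hence rank below `m`. -/
lemma le_card_strictRank_lt (u : ι → α) {m : ℕ} (hm : m ≤ Fintype.card ι) :
    m ≤ #{i | strictRank u i < m} := by
  classical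
  set S : Finset ι := {i | strictRank u i < m}
  by_contra! hS
  have hne : Sᶜ.Nonempty := by
    rw [← card_pos, card_compl]
    omega
  obtain ⟨i, hiS, hmin⟩ := Sᶜ.exists_min_image u hne
  have hlower : ({j | u j < u i} : Finset ι) ⊆ S := fun j hj => by
    by_contra hjS
    exact (mem_filter.1 hj).2.not_ge (hmin j (mem_compl.2 hjS))
  exact mem_compl.1 hiS (mem_filter.2 ⟨mem_univ _, (card_le_card hlower).trans_lt hS⟩)

end StrictRank

section Exchangeable

variable {ι α : Type*} [Fintype ι] [LinearOrder α] [TopologicalSpace α] [OrderClosedTopology α]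
  [SecondCountableTopology α] [MeasurableSpace α] [OpensMeasurableSpace α]

lemma measurable_strictRank (i : ι) : Measurable fun u : ι → α => strictRank u i := by
  simp only [strictRank, card_filter]
  exact Finset.measurable_sum _ fun j _ => Measurable.ite
    (measurableSet_lt (measurable_pi_apply j) (measurable_pi_apply i)) measurable_const
    measurable_const

lemma measurableSet_strictRank_lt (i : ι) (m : ℕ) :
    MeasurableSet {u : ι → α | strictRank u i < m} :=
  measurable_strictRank i (measurableSet_Iio (a := m))

variable {μ : Measure (ι → α)}

lemma measure_strictRank_lt_eq
    (hexch : ∀ σ : Equiv.Perm ι, μ.map (fun u => u ∘ σ) = μ) (i j : ι) (m : ℕ) :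
    μ {u | strictRank u i < m} = μ {u | strictRank u j < m} := by
  classical
  have hcomp : Measurable fun u : ι → α => u ∘ Equiv.swap i j := by fun_prop
  calc μ {u | strictRank u i < m}
      = μ.map (fun u => u ∘ Equiv.swap i j) {u | strictRank u i < m} := by rw [hexch]
    _ = μ {u | strictRank u j < m} := by
      rw [Measure.map_apply hcomp (measurableSet_strictRank_lt i m)]
      simp [Set.preimage, strictRank_comp]

lemma mul_measure_univ_le_card_mul_measure_strictRank_lt
    (hexch : ∀ σ : Equiv.Perm ι, μ.map (fun u => u ∘ σ) = μ) (i : ι) {m : ℕ}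
    (hm : m ≤ Fintype.card ι) :
    m * μ Set.univ ≤ Fintype.card ι * μ {u | strictRank u i < m} := by
  classical
  have hcount (u : ι → α) :
      (m : ℝ≥0∞) ≤ ∑ k, {u | strictRank u k < m}.indicator 1 u := by
    simp only [Set.indicator_apply, Set.mem_ofPred_eq, Pi.one_apply, sum_boole]
    exact_mod_cast le_card_strictRank_lt u hm
  calc m * μ Set.univ = ∫⁻ _, (m : ℝ≥0∞) ∂μ := (lintegral_const _).symm
    _ ≤ ∫⁻ u, ∑ k, {u | strictRank u k < m}.indicator 1 u ∂μ := lintegral_mono hcount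
    _ = ∑ k, μ {u | strictRank u k < m} := by
      rw [lintegral_finsetSum _ fun k _ =>
        measurable_one.indicator (measurableSet_strictRank_lt k m)]
      simp_rw [lintegral_indicator_one (measurableSet_strictRank_lt _ m)]
    _ = Fintype.card ι * μ {u | strictRank u i < m} := by
      simp [measure_strictRank_lt_eq hexch _ i m, card_univ]

end Exchangeable

lemma coe_le_wQuantile_of_strictRank_lt {n : ℕ} {β : ℝ} (u : Fin (n + 1) → ℝ)
    (hrank : strictRank u (Fin.last n) < ⌈β * (n + 1)⌉₊) :
    (u (Fin.last n) : EReal) ≤ wQuantile n β (fun _ => 1 / (n + 1)) (fun i => u i.castSucc) := by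
  refine le_sInf fun t ht => ?_
  by_contra! hlt
  have hbelow : #{i : Fin n | (u i.castSucc : EReal) ≤ t} ≤ strictRank u (Fin.last n) :=
    card_le_card_of_injOn Fin.castSucc (fun i hi => by
      simp only [coe_filter, mem_univ, true_and, Set.mem_ofPred_eq] at hi ⊢
      exact_mod_cast hi.trans_lt hlt) (Fin.castSucc_injective n).injOn
  have hmass : β * (n + 1) ≤ #{i : Fin n | (u i.castSucc : EReal) ≤ t} := by
    simpa [(hlt.trans (EReal.coe_lt_top _)).ne, ← sum_filter, ← div_eq_mul_inv,
      le_div_iff₀ (by positivity : (0 : ℝ) < n + 1)] using ht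
  exact hrank.not_ge ((Nat.ceil_le.2 hmass).trans hbelow)

lemma ENNReal.ofReal_le_of_ceil_le_mul {β : ℝ} {N : ℕ} (hN : N ≠ 0) {x : ℝ≥0∞}
    (h : (⌈β * N⌉₊ : ℝ≥0∞) ≤ N * x) : ENNReal.ofReal β ≤ x := by
  rw [← ENNReal.mul_le_mul_iff_right (a := N) (by simpa) (by simp)]
  calc N * ENNReal.ofReal β = ENNReal.ofReal (N * β) := by
        rw [ENNReal.ofReal_mul (by positivity), ENNReal.ofReal_natCast]
    _ ≤ ENNReal.ofReal ⌈β * N⌉₊ := ENNReal.ofReal_le_ofReal (by linarith [Nat.le_ceil (β * N)])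
    _ = ⌈β * N⌉₊ := ENNReal.ofReal_natCast _
    _ ≤ N * x := h

/-- For exchangeable random variables, the permutation weights with all weight functions
equal to `1` are all `1/(n+1)`, and the standard split conformal coverage guarantee holds:
`P(V_{n+1} ≤ Quantile(β; (1/(n+1)) ∑ δ_{V_i} + (1/(n+1)) δ_∞)) ≥ β`. -/
theorem exchangeable_conformal_coverage
    {Ω : Type*} [MeasurableSpace Ω] (P : Measure Ω) [IsProbabilityMeasure P]
    (n : ℕ) (V : Fin (n + 1) → Ω → ℝ) (hV : ∀ i, Measurable (V i))
    (hexch : ∀ σ : Equiv.Perm (Fin (n + 1)),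
      Measure.map (fun v => v ∘ σ) (Measure.map (fun ω i => V i ω) P) =
        Measure.map (fun ω i => V i ω) P)
    (β : ℝ) (hβ : β ∈ Set.Ioo (0 : ℝ) 1) :
    (∀ (v : Fin (n + 1) → ℝ) (i : Fin (n + 1)),
        permWeight n (fun _ _ => (1 : ℝ)) v i = 1 / (n + 1)) ∧
      ENNReal.ofReal β ≤
        P {ω | (V (Fin.last n) ω : EReal) ≤
          wQuantile n β (fun _ => 1 / (n + 1)) (fun i => V i.castSucc ω)} := by
  refine ⟨permWeight_const_one n, ?_⟩
  have hX : Measurable fun ω i => V i ω := measurable_pi_lambda _ hV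
  have hX_prob : IsProbabilityMeasure (P.map fun ω i => V i ω) :=
    Measure.isProbabilityMeasure_map hX.aemeasurable
  have hm : ⌈β * (n + 1)⌉₊ ≤ Fintype.card (Fin (n + 1)) := by
    rw [Fintype.card_fin, Nat.ceil_le]
    push_cast
    nlinarith [hβ.2]
  have hrank := mul_measure_univ_le_card_mul_measure_strictRank_lt hexch (Fin.last n) hm
  rw [measure_univ, mul_one, Fintype.card_fin] at hrank
  calc ENNReal.ofReal β
      ≤ P.map (fun ω i => V i ω) {u | strictRank u (Fin.last n) < ⌈β * (n + 1)⌉₊} :=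
        ENNReal.ofReal_le_of_ceil_le_mul n.succ_ne_zero (by exact_mod_cast hrank)
    _ = P ((fun ω i => V i ω) ⁻¹' {u | strictRank u (Fin.last n) < ⌈β * (n + 1)⌉₊}) :=
        Measure.map_apply hX (measurableSet_strictRank_lt _ _)
    _ ≤ _ := measure_mono fun ω hω => coe_le_wQuantile_of_strictRank_lt _ hω
end
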